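/- arXiv:2004.07448 — 6 statements merged into one kernel-verified Lean document; each statement's English description precedes it below -/
import Mathlib

section
/- Let $d_1, d_2 > 0$ with $d_1 d_2 > 1$, let $x_1, x_2 \in (0,1]$ with $\lambda := x_1 + x_2 - 1 > 0$, and let $y_1, y_2 \ge 0$, $t \ge 0$. Then $t \ge \frac{(d_1d_2-1)(d_1 x_2 y_1^2 + d_2 x_1 y_2^2) + 2\lambda d_1 d_2 y_1 y_2 + \lambda(d_1 y_1^2 + d_2 y_2^2)}{(d_1d_2-1)x_1 x_2 - \lambda^2 + \lambda(x_1 + x_2)}$ holds if and only if the matrix $\begin{pmatrix} t/(d_1d_2-1) & y_1 & y_2 \\ y_1 & d_2 x_1 + x_2/d_1 - 1/d_1 & 1 - x_1 - x_2 \\ y_2 & 1 - x_1 - x_2 & x_1/d_2 + d_1 x_2 - 1/d_2 \end{pmatrix}$ is positive semidefinite. -/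
/-!
The lower-right `2 × 2` block of the matrix is positive definite, so by the Schur complement
criterion the matrix is positive semidefinite exactly when its top-left entry dominates
`yᵀ B⁻¹ y` for the block `B` and `y = (y₁, y₂)`. Clearing the denominators `d₁`, `d₂` and
`d₁ d₂ - 1` turns this inequality into the stated one, whose denominator is
`(d₁ d₂ - 1) x₁ x₂ + λ > 0`.
-/

open Matrix

namespace Matrix

lemma dotProduct_mulVec_sym3 (a b c p q r : ℝ) (z : Fin 3 → ℝ) :
    star z ⬝ᵥ (!![a, b, c; b, p, q; c, q, r] *ᵥ z)
      = a * z 0 ^ 2 + 2 * b * z 0 * z 1 + 2 * c * z 0 * z 2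
        + p * z 1 ^ 2 + 2 * q * z 1 * z 2 + r * z 2 ^ 2 := by
  simp only [dotProduct, mulVec, Fin.sum_univ_three, of_apply, cons_val', cons_val_zero,
    cons_val_one, cons_val_two, empty_val', cons_val_fin_one, star_trivial,
    tail_cons, vecHead]
  ring

/-- The Schur complement criterion: `r b² - 2 q b c + p c² = (p r - q²) · (b, c) B⁻¹ (b, c)ᵀ`
for the lower-right block `B`, which is positive definite. -/
lemma posSemidef_sym3_iff {a b c p q r : ℝ} (hp : 0 < p) (hδ : 0 < p * r - q ^ 2) :
    (!![a, b, c; b, p, q; c, q, r]).PosSemidef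
      ↔ r * b ^ 2 - 2 * q * b * c + p * c ^ 2 ≤ a * (p * r - q ^ 2) := by
  set δ := p * r - q ^ 2
  set S := r * b ^ 2 - 2 * q * b * c + p * c ^ 2
  constructor
  · intro h
    -- the test vector is `δ • (1, -B⁻¹ (b, c))`
    have hz := h.dotProduct_mulVec_nonneg ![δ, -(r * b - q * c), -(p * c - q * b)]
    rw [dotProduct_mulVec_sym3] at hz
    simp only [cons_val_zero, cons_val_one, cons_val_two, head_cons, tail_cons] at hz
    have hquad : 0 ≤ δ * (a * δ - S) := by linarith
    exact sub_nonneg.1 ((mul_nonneg_iff_of_pos_left hδ).1 hquad)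
  · intro h
    refine PosSemidef.of_dotProduct_mulVec_nonneg ?_ fun z => ?_
    · ext i j
      fin_cases i <;> fin_cases j <;> rfl
    rw [dotProduct_mulVec_sym3]
    have hS := sub_nonneg.2 h
    -- completing the square twice
    have hsquares : 0 ≤ δ * (p * z 1 + b * z 0 + q * z 2) ^ 2
        + (δ * z 2 + (p * c - q * b) * z 0) ^ 2 + p * (a * δ - S) * z 0 ^ 2 := by
      positivity
    exact nonneg_of_mul_nonneg_right (hsquares.trans_eq (by ring)) (mul_pos hp hδ)

end Matrix

section ConvexEnvelopePiece

variable {d₁ d₂ : ℝ} (x₁ x₂ : ℝ)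

lemma mul_det_lowerBlock (hd₁ : d₁ ≠ 0) (hd₂ : d₂ ≠ 0) :
    d₁ * d₂ * ((d₂ * x₁ + x₂ / d₁ - 1 / d₁) * (x₁ / d₂ + d₁ * x₂ - 1 / d₂) - (1 - x₁ - x₂) ^ 2)
      = (d₁ * d₂ - 1) * ((d₁ * d₂ - 1) * x₁ * x₂ + (x₁ + x₂ - 1)) := by
  field_simp
  ring

lemma mul_schurComplement_lowerBlock (y₁ y₂ t : ℝ) (hd₁ : d₁ ≠ 0) (hd₂ : d₂ ≠ 0)
    (hd : d₁ * d₂ - 1 ≠ 0) :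
    d₁ * d₂ * (t / (d₁ * d₂ - 1) * ((d₂ * x₁ + x₂ / d₁ - 1 / d₁)
        * (x₁ / d₂ + d₁ * x₂ - 1 / d₂) - (1 - x₁ - x₂) ^ 2)
      - ((x₁ / d₂ + d₁ * x₂ - 1 / d₂) * y₁ ^ 2 - 2 * (1 - x₁ - x₂) * y₁ * y₂
        + (d₂ * x₁ + x₂ / d₁ - 1 / d₁) * y₂ ^ 2))
    = t * ((d₁ * d₂ - 1) * x₁ * x₂ - (x₁ + x₂ - 1) ^ 2 + (x₁ + x₂ - 1) * (x₁ + x₂))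
      - ((d₁ * d₂ - 1) * (d₁ * x₂ * y₁ ^ 2 + d₂ * x₁ * y₂ ^ 2)
        + 2 * (x₁ + x₂ - 1) * d₁ * d₂ * y₁ * y₂
        + (x₁ + x₂ - 1) * (d₁ * y₁ ^ 2 + d₂ * y₂ ^ 2)) := by
  field_simp
  ring

end ConvexEnvelopePiece

theorem stmt_4_general (d₁ d₂ x₁ x₂ y₁ y₂ t : ℝ)
    (hd₁ : 0 < d₁) (hd : 1 < d₁ * d₂)
    (hx₁ : x₁ ∈ Set.Ioc (0:ℝ) 1) (hx₂ : x₂ ∈ Set.Ioc (0:ℝ) 1)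
    (hlam : 0 < x₁ + x₂ - 1) :
    (((d₁ * d₂ - 1) * (d₁ * x₂ * y₁ ^ 2 + d₂ * x₁ * y₂ ^ 2)
        + 2 * (x₁ + x₂ - 1) * d₁ * d₂ * y₁ * y₂
        + (x₁ + x₂ - 1) * (d₁ * y₁ ^ 2 + d₂ * y₂ ^ 2)) /
      ((d₁ * d₂ - 1) * x₁ * x₂ - (x₁ + x₂ - 1) ^ 2 + (x₁ + x₂ - 1) * (x₁ + x₂)) ≤ t)
      ↔ (!![t / (d₁ * d₂ - 1), y₁, y₂;
            y₁, d₂ * x₁ + x₂ / d₁ - 1 / d₁, 1 - x₁ - x₂;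
            y₂, 1 - x₁ - x₂, x₁ / d₂ + d₁ * x₂ - 1 / d₂] : Matrix (Fin 3) (Fin 3) ℝ).PosSemidef := by
  obtain ⟨hx₁, -⟩ := hx₁
  obtain ⟨hx₂, -⟩ := hx₂
  have hd₂ : 0 < d₂ := pos_of_mul_pos_right (by linarith) hd₁.le
  have hκ : 0 < d₁ * d₂ - 1 := by linarith
  have hden : 0 < (d₁ * d₂ - 1) * x₁ * x₂ - (x₁ + x₂ - 1) ^ 2 + (x₁ + x₂ - 1) * (x₁ + x₂) := by
    have : 0 < (d₁ * d₂ - 1) * x₁ * x₂ + (x₁ + x₂ - 1) := by positivity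
    linarith
  have hp : 0 < d₂ * x₁ + x₂ / d₁ - 1 / d₁ := by
    have hp_eq : d₂ * x₁ + x₂ / d₁ - 1 / d₁ = ((d₁ * d₂ - 1) * x₁ + (x₁ + x₂ - 1)) / d₁ := by
      field_simp
      ring
    rw [hp_eq]
    positivity
  have hδ : 0 < (d₂ * x₁ + x₂ / d₁ - 1 / d₁) * (x₁ / d₂ + d₁ * x₂ - 1 / d₂) - (1 - x₁ - x₂) ^ 2 := by
    refine pos_of_mul_pos_right (a := d₁ * d₂) ?_ (by positivity)
    rw [mul_det_lowerBlock x₁ x₂ hd₁.ne' hd₂.ne']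
    positivity
  rw [posSemidef_sym3_iff hp hδ, div_le_iff₀ hden, iff_comm, ← sub_nonneg,
    ← mul_nonneg_iff_of_pos_left (mul_pos hd₁ hd₂),
    mul_schurComplement_lowerBlock x₁ x₂ y₁ y₂ t hd₁.ne' hd₂.ne' hκ.ne', sub_nonneg]

theorem stmt_4 (d₁ d₂ x₁ x₂ y₁ y₂ t : ℝ)
    (hd₁ : 0 < d₁) (hd₂ : 0 < d₂) (hd : 1 < d₁ * d₂)
    (hx₁ : x₁ ∈ Set.Ioc (0:ℝ) 1) (hx₂ : x₂ ∈ Set.Ioc (0:ℝ) 1)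
    (hlam : 0 < x₁ + x₂ - 1) (hy₁ : 0 ≤ y₁) (hy₂ : 0 ≤ y₂) (ht : 0 ≤ t) :
    (((d₁ * d₂ - 1) * (d₁ * x₂ * y₁ ^ 2 + d₂ * x₁ * y₂ ^ 2)
        + 2 * (x₁ + x₂ - 1) * d₁ * d₂ * y₁ * y₂
        + (x₁ + x₂ - 1) * (d₁ * y₁ ^ 2 + d₂ * y₂ ^ 2)) /
      ((d₁ * d₂ - 1) * x₁ * x₂ - (x₁ + x₂ - 1) ^ 2 + (x₁ + x₂ - 1) * (x₁ + x₂)) ≤ t)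
      ↔ (!![t / (d₁ * d₂ - 1), y₁, y₂;
            y₁, d₂ * x₁ + x₂ / d₁ - 1 / d₁, 1 - x₁ - x₂;
            y₂, 1 - x₁ - x₂, x₁ / d₂ + d₁ * x₂ - 1 / d₂] : Matrix (Fin 3) (Fin 3) ℝ).PosSemidef :=
  stmt_4_general d₁ d₂ x₁ x₂ y₁ y₂ t hd₁ hd hx₁ hx₂ hlam
end

section
/- Let $d_1, d_2 \ge 0$ with $d_1 d_2 \ge 1$, $x_1, x_2 \in (0,1]$, $y_1, y_2 > 0$, and $0 \le \lambda \le \min\{x_1, x_2\}$. If $\lambda \le (x_1 y_2 - d_1 x_2 y_1)/y_2$, then $\lambda \ge (x_2 y_1 - d_2 x_1 y_2)/y_1$. -/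
theorem le_mul_of_mul_le_of_one_le_mul {α : Type*} [CommRing α] [LinearOrder α]
    [IsStrictOrderedRing α] {a b u v : α} (hb : 0 ≤ b) (hab : 1 ≤ a * b) (hu : 0 ≤ u)
    (h : a * u ≤ v) : u ≤ b * v :=
  calc u ≤ a * b * u := le_mul_of_one_le_left hu hab
    _ = b * (a * u) := by ring
    _ ≤ b * v := mul_le_mul_of_nonneg_left h hb

theorem stmt_6_general (d₁ d₂ x₁ x₂ y₁ y₂ lam : ℝ)
    (hd₁ : 0 ≤ d₁) (hd₂ : 0 ≤ d₂) (hd : 1 ≤ d₁ * d₂)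
    (hy₁ : 0 < y₁) (hy₂ : 0 < y₂)
    (hlam0 : 0 ≤ lam) (hlam : lam ≤ min x₁ x₂)
    (h : lam ≤ (x₁ * y₂ - d₁ * x₂ * y₁) / y₂) :
    (x₂ * y₁ - d₂ * x₁ * y₂) / y₁ ≤ lam := by
  rw [le_div_iff₀ hy₂] at h
  have hx₂ : 0 ≤ x₂ - lam := sub_nonneg.2 (hlam.trans (min_le_right _ _))
  have h₁ : d₁ * ((x₂ - lam) * y₁) ≤ x₁ * y₂ := by
    nlinarith [mul_nonneg (mul_nonneg hd₁ hlam0) hy₁.le, mul_nonneg hlam0 hy₂.le]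
  have h₂ : (x₂ - lam) * y₁ ≤ d₂ * (x₁ * y₂) :=
    le_mul_of_mul_le_of_one_le_mul hd₂ hd (mul_nonneg hx₂ hy₁.le) h₁
  rw [div_le_iff₀ hy₁]
  linarith

theorem stmt_6 (d₁ d₂ x₁ x₂ y₁ y₂ lam : ℝ)
    (hd₁ : 0 ≤ d₁) (hd₂ : 0 ≤ d₂) (hd : 1 ≤ d₁ * d₂)
    (hx₁ : x₁ ∈ Set.Ioc (0:ℝ) 1) (hx₂ : x₂ ∈ Set.Ioc (0:ℝ) 1)
    (hy₁ : 0 < y₁) (hy₂ : 0 < y₂)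
    (hlam0 : 0 ≤ lam) (hlam : lam ≤ min x₁ x₂)
    (h : lam ≤ (x₁ * y₂ - d₁ * x₂ * y₁) / y₂) :
    (x₂ * y₁ - d₂ * x₁ * y₂) / y₁ ≤ lam :=
  stmt_6_general d₁ d₂ x₁ x₂ y₁ y₂ lam hd₁ hd₂ hd hy₁ hy₂ hlam0 hlam h
end

section
/- Let $x_1, x_2, y_1, y_2 \in \mathbb{R}$, $Y$ a symmetric $2\times2$ matrix, and $W$ a symmetric $3\times 3$ PSD matrix satisfying: $W_{12} = Y_{12}$; $(Y_{11} - W_{11})(x_1 - W_{33}) \ge (y_1 - W_{31})^2$ with $W_{11} \le Y_{11}$, $W_{33} \le x_1$; $(Y_{22} - W_{22})(x_2 - W_{33}) \ge (y_2 - W_{32})^2$ with $W_{22} \le Y_{22}$, $W_{33} \le x_2$; and $W_{33} \ge 0$. Then the matrix $\begin{pmatrix} Y_{11} & Y_{12} & y_1 \\ Y_{12} & Y_{22} & y_2 \\ y_1 & y_2 & x_1 + x_2 \end{pmatrix}$ is positive semidefinite. -/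
/-!
Subtracting `W` leaves a matrix that splits as a sum of three positive semidefinite pieces:
the `2 × 2` block `[[Y₁₁ - W₁₁, y₁ - W₃₁], [y₁ - W₃₁, x₁ - W₃₃]]` placed on the coordinates
`{1, 3}`, the analogous block for `Y₂₂, y₂, x₂` on `{2, 3}`, and `W₃₃ e₃ e₃ᵀ`. The two blocks are
positive semidefinite because their diagonals are nonnegative and their determinants are
nonnegative, which is exactly what the hypotheses say.
-/

open Matrix

lemma quadratic_nonneg_of_sq_le_mul {a b c : ℝ} (ha : 0 ≤ a) (hc : 0 ≤ c)
    (h : b ^ 2 ≤ a * c) (s t : ℝ) : 0 ≤ a * s ^ 2 + 2 * b * s * t + c * t ^ 2 := by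
  rcases ha.eq_or_lt with rfl | ha
  · obtain rfl : b = 0 := by nlinarith
    simpa using mul_nonneg hc (sq_nonneg t)
  · -- `a * (a s² + 2 b s t + c t²) = (a s + b t)² + (a c - b²) t²`
    nlinarith [sq_nonneg (a * s + b * t), mul_nonneg (sub_nonneg.2 h) (sq_nonneg t)]

lemma Matrix.posSemidef_fin_two_of_sq_le_mul {a b c : ℝ} (ha : 0 ≤ a) (hc : 0 ≤ c)
    (h : b ^ 2 ≤ a * c) : (!![a, b; b, c]).PosSemidef := by
  refine .of_dotProduct_mulVec_nonneg ?_ fun v => ?_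
  · ext i j
    fin_cases i <;> fin_cases j <;> rfl
  · have := quadratic_nonneg_of_sq_le_mul ha hc h (v 0) (v 1)
    simp only [star_trivial, dotProduct, mulVec, Fin.sum_univ_two, cons_val', cons_val_zero,
      cons_val_one, of_apply]
    linarith

theorem stmt_9_general (x₁ x₂ y₁ y₂ : ℝ) (Y : Matrix (Fin 2) (Fin 2) ℝ)
    (W : Matrix (Fin 3) (Fin 3) ℝ) (hWpsd : W.PosSemidef)
    (h12 : W 0 1 = Y 0 1)
    (h1 : (Y 0 0 - W 0 0) * (x₁ - W 2 2) ≥ (y₁ - W 2 0) ^ 2)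
    (h11 : W 0 0 ≤ Y 0 0) (h33a : W 2 2 ≤ x₁)
    (h2 : (Y 1 1 - W 1 1) * (x₂ - W 2 2) ≥ (y₂ - W 2 1) ^ 2)
    (h22 : W 1 1 ≤ Y 1 1) (h33b : W 2 2 ≤ x₂)
    (h33 : 0 ≤ W 2 2) :
    (!![Y 0 0, Y 0 1, y₁;
        Y 0 1, Y 1 1, y₂;
        y₁, y₂, x₁ + x₂] : Matrix (Fin 3) (Fin 3) ℝ).PosSemidef := by
  have hP₁ := posSemidef_fin_two_of_sq_le_mul (sub_nonneg.2 h11) (sub_nonneg.2 h33a) h1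
  have hP₂ := posSemidef_fin_two_of_sq_le_mul (sub_nonneg.2 h22) (sub_nonneg.2 h33b) h2
  have hE : (diagonal ![0, 0, W 2 2]).PosSemidef :=
    .diagonal fun i => by fin_cases i <;> simp [h33]
  have hW (i j : Fin 3) : W j i = W i j := by simpa using hWpsd.isHermitian.apply i j
  convert (hWpsd.add (hP₁.conjTranspose_mul_mul_same !![1, 0, 0; 0, 0, 1])).add
    (hP₂.conjTranspose_mul_mul_same !![0, 1, 0; 0, 0, 1]) |>.add hE using 1
  ext i j
  fin_cases i <;> fin_cases j <;> simp [Matrix.mul_apply, Fin.sum_univ_two] <;>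
    linarith [hW 0 1, hW 0 2, hW 1 2]

theorem stmt_9 (x₁ x₂ y₁ y₂ : ℝ) (Y : Matrix (Fin 2) (Fin 2) ℝ) (hY : Y.IsSymm)
    (W : Matrix (Fin 3) (Fin 3) ℝ) (hWsymm : W.IsSymm) (hWpsd : W.PosSemidef)
    (h12 : W 0 1 = Y 0 1)
    (h1 : (Y 0 0 - W 0 0) * (x₁ - W 2 2) ≥ (y₁ - W 2 0) ^ 2)
    (h11 : W 0 0 ≤ Y 0 0) (h33a : W 2 2 ≤ x₁)
    (h2 : (Y 1 1 - W 1 1) * (x₂ - W 2 2) ≥ (y₂ - W 2 1) ^ 2)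
    (h22 : W 1 1 ≤ Y 1 1) (h33b : W 2 2 ≤ x₂)
    (h33 : 0 ≤ W 2 2) :
    (!![Y 0 0, Y 0 1, y₁;
        Y 0 1, Y 1 1, y₂;
        y₁, y₂, x₁ + x₂] : Matrix (Fin 3) (Fin 3) ℝ).PosSemidef :=
  stmt_9_general x₁ x₂ y₁ y₂ Y W hWpsd h12 h1 h11 h33a h2 h22 h33b h33
end

section
/- Let $x \in \{0,1\}^2$ and $y \in \mathbb{R}_+^2$ with $y_i(1 - x_i) = 0$ for $i=1,2$, and let $Y = yy'$. Then there exists a symmetric PSD $3 \times 3$ matrix $W$ with $W_{12} = Y_{12}$, $(Y_{11}-W_{11})(x_1-W_{33}) \ge (y_1-W_{31})^2$, $W_{11} \le Y_{11}$, $W_{33} \le x_1$, $(Y_{22}-W_{22})(x_2-W_{33}) \ge (y_2-W_{32})^2$, $W_{22} \le Y_{22}$, $W_{33} \le x_2$, $0 \le W_{31} \le y_1$, $0 \le W_{32} \le y_2$, and $W_{33} \ge x_1 + x_2 - 1$. -/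
/-! If `x₁ = x₂ = 1`, the rank-one matrix `v vᵀ` with `v = (y₁, y₂, 1)` satisfies every
constraint with equality or trivially. Otherwise some `xᵢ = 0`, which forces `yᵢ = 0`, and
`W = 0` works: complementarity `yᵢ (1 - xᵢ) = 0` gives `yᵢ² xᵢ = yᵢ²`, and `x₁ + x₂ - 1 ≤ 0`. -/

open Matrix

theorem stmt_10 (x₁ x₂ y₁ y₂ : ℝ)
    (hx₁ : x₁ = 0 ∨ x₁ = 1) (hx₂ : x₂ = 0 ∨ x₂ = 1)
    (hy₁ : 0 ≤ y₁) (hy₂ : 0 ≤ y₂)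
    (hc₁ : y₁ * (1 - x₁) = 0) (hc₂ : y₂ * (1 - x₂) = 0) :
    ∃ W : Matrix (Fin 3) (Fin 3) ℝ, W.PosSemidef ∧
      W 0 1 = y₁ * y₂ ∧
      (y₁ * y₁ - W 0 0) * (x₁ - W 2 2) ≥ (y₁ - W 2 0) ^ 2 ∧
      W 0 0 ≤ y₁ * y₁ ∧ W 2 2 ≤ x₁ ∧
      (y₂ * y₂ - W 1 1) * (x₂ - W 2 2) ≥ (y₂ - W 2 1) ^ 2 ∧
      W 1 1 ≤ y₂ * y₂ ∧ W 2 2 ≤ x₂ ∧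
      0 ≤ W 2 0 ∧ W 2 0 ≤ y₁ ∧ 0 ≤ W 2 1 ∧ W 2 1 ≤ y₂ ∧
      x₁ + x₂ - 1 ≤ W 2 2 := by
  by_cases hx : x₁ = 1 ∧ x₂ = 1
  · obtain ⟨rfl, rfl⟩ := hx
    let v : Fin 3 → ℝ := ![y₁, y₂, 1]
    refine ⟨vecMulVec v v, by simpa using posSemidef_vecMulVec_self_star v, ?_⟩
    simp [v, vecMulVec_apply, hy₁, hy₂]
  · have hy : y₁ * y₂ = 0 := by
      rcases hx₁ with rfl | rfl <;> rcases hx₂ with rfl | rfl <;> simp_all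
    refine ⟨0, PosSemidef.zero, ?_⟩
    simp only [Matrix.zero_apply, sub_zero]
    refine ⟨hy.symm, ?_, mul_self_nonneg y₁, ?_, ?_, mul_self_nonneg y₂, ?_, le_rfl, hy₁, le_rfl,
      hy₂, ?_⟩
    · linear_combination y₁ * hc₁
    · rcases hx₁ with rfl | rfl <;> norm_num
    · linear_combination y₂ * hc₂
    · rcases hx₂ with rfl | rfl <;> norm_num
    · rcases hx₁ with rfl | rfl <;> rcases hx₂ with rfl | rfl <;> simp_all
end

section
/- Let $d_1, d_2 \ge 0$ with $d_1 d_2 \ge 1$, let $x \in \{0,1\}^2$, $y \in \mathbb{R}_+^2$ with $y_i(1-x_i) = 0$ for $i=1,2$, and $t \ge d_1 y_1^2 + 2y_1y_2 + d_2 y_2^2$. Then there exist $\lambda \in \mathbb{R}_+$ and $z \in \mathbb{R}_+^2$ with $x_1 + x_2 - 1 \le \lambda \le \min\{x_1, x_2\}$ and $t \ge \frac{d_1(y_1 - z_1)^2}{x_1 - \lambda} + \frac{d_2(y_2 - z_2)^2}{x_2 - \lambda} + \frac{d_1 z_1^2 + 2z_1z_2 + d_2 z_2^2}{\lambda}$.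 -/
/-!
Take `λ = x₁ x₂` and `z = λ y`. Complementarity `yᵢ = xᵢ yᵢ` gives `yᵢ - zᵢ = yᵢ (xᵢ - λ)`, so each
perspective term has the shape `a s² / s`, which equals `a s` also when `s = 0`; likewise the last
term is `λ² q(y) / λ = λ q(y)`. Using complementarity once more, the objective collapses to `q(y)`
itself, and `λ` satisfies the McCormick bounds because `x ∈ [0, 1]²`.
-/

lemma mul_sq_div_self {G₀ : Type*} [GroupWithZero G₀] (a s : G₀) : a * s ^ 2 / s = a * s := by
  rw [mul_div_assoc, sq, mul_self_div_self]

def quadForm (d₁ d₂ a b : ℝ) : ℝ := d₁ * a ^ 2 + 2 * a * b + d₂ * b ^ 2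

lemma quadForm_mul_mul (d₁ d₂ c a b : ℝ) :
    quadForm d₁ d₂ (c * a) (c * b) = quadForm d₁ d₂ a b * c ^ 2 := by
  unfold quadForm; ring

lemma perspective_objective_eq (d₁ d₂ x₁ x₂ y₁ y₂ : ℝ)
    (hc₁ : y₁ * (1 - x₁) = 0) (hc₂ : y₂ * (1 - x₂) = 0) :
    d₁ * (y₁ - x₁ * x₂ * y₁) ^ 2 / (x₁ - x₁ * x₂) + d₂ * (y₂ - x₁ * x₂ * y₂) ^ 2 / (x₂ - x₁ * x₂)
      + quadForm d₁ d₂ (x₁ * x₂ * y₁) (x₁ * x₂ * y₂) / (x₁ * x₂) = quadForm d₁ d₂ y₁ y₂ := by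
  have e₁ : y₁ - x₁ * x₂ * y₁ = y₁ * (x₁ - x₁ * x₂) := by linear_combination hc₁
  have e₂ : y₂ - x₁ * x₂ * y₂ = y₂ * (x₂ - x₁ * x₂) := by linear_combination hc₂
  rw [e₁, e₂, quadForm_mul_mul, mul_pow, mul_pow, ← mul_assoc, ← mul_assoc,
    mul_sq_div_self, mul_sq_div_self, mul_sq_div_self]
  unfold quadForm
  linear_combination (-(d₁ * y₁) - 2 * x₂ * y₂) * hc₁ + (-(d₂ * y₂) - 2 * y₁) * hc₂

lemma add_sub_one_le_mul {x₁ x₂ : ℝ} (hx₁ : x₁ ≤ 1) (hx₂ : x₂ ≤ 1) : x₁ + x₂ - 1 ≤ x₁ * x₂ := by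
  nlinarith [mul_nonneg (sub_nonneg.2 hx₁) (sub_nonneg.2 hx₂)]

lemma mul_le_min_of_mem_Icc {x₁ x₂ : ℝ} (hx₁ : x₁ ∈ Set.Icc 0 1) (hx₂ : x₂ ∈ Set.Icc 0 1) :
    x₁ * x₂ ≤ min x₁ x₂ :=
  le_min (mul_le_of_le_one_right hx₁.1 hx₂.2) (mul_le_of_le_one_left hx₂.1 hx₁.2)

lemma mem_Icc_of_eq_zero_or_eq_one {x : ℝ} (hx : x = 0 ∨ x = 1) : x ∈ Set.Icc 0 1 := by
  rcases hx with rfl | rfl <;> norm_num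

theorem stmt_15_general (d₁ d₂ x₁ x₂ y₁ y₂ t : ℝ)
    (hx₁ : x₁ = 0 ∨ x₁ = 1) (hx₂ : x₂ = 0 ∨ x₂ = 1)
    (hy₁ : 0 ≤ y₁) (hy₂ : 0 ≤ y₂)
    (hc₁ : y₁ * (1 - x₁) = 0) (hc₂ : y₂ * (1 - x₂) = 0)
    (ht : d₁ * y₁ ^ 2 + 2 * y₁ * y₂ + d₂ * y₂ ^ 2 ≤ t) :
    ∃ lam z₁ z₂ : ℝ, 0 ≤ lam ∧ 0 ≤ z₁ ∧ 0 ≤ z₂ ∧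
      x₁ + x₂ - 1 ≤ lam ∧ lam ≤ min x₁ x₂ ∧
      d₁ * (y₁ - z₁) ^ 2 / (x₁ - lam) + d₂ * (y₂ - z₂) ^ 2 / (x₂ - lam)
        + (d₁ * z₁ ^ 2 + 2 * z₁ * z₂ + d₂ * z₂ ^ 2) / lam ≤ t := by
  have hx₁' := mem_Icc_of_eq_zero_or_eq_one hx₁
  have hx₂' := mem_Icc_of_eq_zero_or_eq_one hx₂
  have hlam : 0 ≤ x₁ * x₂ := mul_nonneg hx₁'.1 hx₂'.1
  refine ⟨x₁ * x₂, x₁ * x₂ * y₁, x₁ * x₂ * y₂, hlam, mul_nonneg hlam hy₁, mul_nonneg hlam hy₂,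
    add_sub_one_le_mul hx₁'.2 hx₂'.2, mul_le_min_of_mem_Icc hx₁' hx₂', ?_⟩
  exact (perspective_objective_eq d₁ d₂ x₁ x₂ y₁ y₂ hc₁ hc₂).le.trans ht

theorem stmt_15 (d₁ d₂ x₁ x₂ y₁ y₂ t : ℝ)
    (hd₁ : 0 ≤ d₁) (hd₂ : 0 ≤ d₂) (hd : 1 ≤ d₁ * d₂)
    (hx₁ : x₁ = 0 ∨ x₁ = 1) (hx₂ : x₂ = 0 ∨ x₂ = 1)
    (hy₁ : 0 ≤ y₁) (hy₂ : 0 ≤ y₂)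
    (hc₁ : y₁ * (1 - x₁) = 0) (hc₂ : y₂ * (1 - x₂) = 0)
    (ht : d₁ * y₁ ^ 2 + 2 * y₁ * y₂ + d₂ * y₂ ^ 2 ≤ t) :
    ∃ lam z₁ z₂ : ℝ, 0 ≤ lam ∧ 0 ≤ z₁ ∧ 0 ≤ z₂ ∧
      x₁ + x₂ - 1 ≤ lam ∧ lam ≤ min x₁ x₂ ∧
      d₁ * (y₁ - z₁) ^ 2 / (x₁ - lam) + d₂ * (y₂ - z₂) ^ 2 / (x₂ - lam)
        + (d₁ * z₁ ^ 2 + 2 * z₁ * z₂ + d₂ * z₂ ^ 2) / lam ≤ t :=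
  stmt_15_general d₁ d₂ x₁ x₂ y₁ y₂ t hx₁ hx₂ hy₁ hy₂ hc₁ hc₂ ht
end

section
/- Suppose the $5 \times 5$ symmetric matrix $M = \begin{pmatrix} Y_{11} & Y_{12} & W_{31} & y_1 - W_{31} & 0 \\ Y_{12} & Y_{22} & W_{32} & 0 & y_2 - W_{32} \\ W_{31} & W_{32} & W_{33} & 0 & 0 \\ y_1 - W_{31} & 0 & 0 & x_1 - W_{33} & 0 \\ 0 & y_2 - W_{32} & 0 & 0 & x_2 - W_{33} \end{pmatrix}$ is positive semidefinite. Then $\begin{pmatrix} Y_{11} & Y_{12} & y_1 \\ Y_{12} & Y_{22} & y_2 \\ y_1 & y_2 & x_1 + x_2 - W_{33} \end{pmatrix}$ is positive semidefinite. -/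
open Matrix

/-! Let `g : Fin 5 → Fin 3` send the last three indices to `2`. Summing the rows and the columns
of `M` over the fibres of `g` is the congruence `Pᵀ M P` by the `0/1` matrix `P` of `g`, so it
preserves positive semidefiniteness, and it turns `M` into the target matrix. -/

namespace Matrix

variable {m n : Type*} [Fintype m] [DecidableEq n]

def fiberSum {R : Type*} [AddCommMonoid R] (g : m → n) (A : Matrix m m R) : Matrix n n R :=
  of fun i j => ∑ a with g a = i, ∑ b with g b = j, A a b

def graphIndicator {R : Type*} [Zero R] [One R] (g : m → n) : Matrix m n R :=
  of fun a i => if g a = i then 1 else 0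

lemma fiberSum_eq_conjTranspose_mul_mul {R : Type*} [Semiring R] [StarRing R] (g : m → n)
    (A : Matrix m m R) :
    fiberSum g A = (graphIndicator g : Matrix m n R)ᴴ * A * (graphIndicator g : Matrix m n R) := by
  ext i j
  simp only [graphIndicator, mul_apply, conjTranspose_apply, of_apply, apply_ite star, star_one,
    star_zero, ite_mul, one_mul, zero_mul, mul_ite, mul_one, mul_zero, ← Finset.sum_filter]
  exact Finset.sum_comm

lemma PosSemidef.fiberSum {R : Type*} [Ring R] [PartialOrder R] [StarRing R] [Fintype n]
    {A : Matrix m m R} (hA : A.PosSemidef) (g : m → n) : (fiberSum g A).PosSemidef := by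
  rw [fiberSum_eq_conjTranspose_mul_mul]
  exact hA.conjTranspose_mul_mul_same _

end Matrix

theorem stmt_19 (Y₁₁ Y₁₂ Y₂₂ y₁ y₂ x₁ x₂ W₃₁ W₃₂ W₃₃ : ℝ)
    (hM : (!![Y₁₁, Y₁₂, W₃₁, y₁ - W₃₁, 0;
              Y₁₂, Y₂₂, W₃₂, 0, y₂ - W₃₂;
              W₃₁, W₃₂, W₃₃, 0, 0;
              y₁ - W₃₁, 0, 0, x₁ - W₃₃, 0;
              0, y₂ - W₃₂, 0, 0, x₂ - W₃₃] : Matrix (Fin 5) (Fin 5) ℝ).PosSemidef) :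
    (!![Y₁₁, Y₁₂, y₁;
        Y₁₂, Y₂₂, y₂;
        y₁, y₂, x₁ + x₂ - W₃₃] : Matrix (Fin 3) (Fin 3) ℝ).PosSemidef := by
  convert hM.fiberSum (![0, 1, 2, 2, 2] : Fin 5 → Fin 3) using 1
  ext i j
  fin_cases i <;> fin_cases j <;>
    simp [fiberSum, Finset.sum_filter, Fin.sum_univ_five, add_sub_assoc]
end
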